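/- Fix k ≥ 1 and letters a₁,…,a_k ∈ Σ with a_i ≠ a_{i+1} for all 1 ≤ i < k, let S = {a₁,…,a_k}, and let P↗(α) for α ∈ S be the up projectors of A[a₁,…,a_k], with P↗(c) := I for c ∈ Σ∖S. For a word w = w₁⋯w_n ∈ Σ* set π := e₁ · P↗(w₁) ⋯ P↗(w_n) ∈ ℝ^{1×(k+1)}. Then: (1) if w ∈ L[a₁,…,a_k] = Σ* a₁ Σ* ⋯ Σ* a_k Σ*, then (π)_i > 0 for every 1 ≤ i ≤ k+1; and (2) for all 1 ≤ j ≤ i ≤ k+1, if (π)_i > 0 then (π)_j ≥ 2^{−k}. -/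

import Mathlib

/-- The "up" orthogonal projector `P↗(α)` of dimension `(k+1)×(k+1)` associated with
the word `as = a₁⋯a_k` and the letter `α`: writing `j₁^{(α)} < ⋯ < j_{#α}^{(α)}` for
the (1-based) positions of `α` in `as`, the entry `(r,s)` is `1` if `r = s` and `r`
belongs to no block `{jᵢ^{(α)}, jᵢ^{(α)}+1}`, `1/2` if `r` and `s` belong to a common
block `{jᵢ^{(α)}, jᵢ^{(α)}+1}`, and `0` otherwise.  (Indices here are 0-based: the
block of a 0-based position `q` with `as.get q = α` is `{q, q+1}`.) -/
noncomputable def upProj {σ : Type} [DecidableEq σ] (as : List σ) (α : σ) :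
    Matrix (Fin (as.length + 1)) (Fin (as.length + 1)) ℝ :=
  Matrix.of fun r s =>
    if ∃ q : Fin as.length, as.get q = α ∧
        (r = q.castSucc ∨ r = q.succ) ∧ (s = q.castSucc ∨ s = q.succ) then 1 / 2
    else if r = s then 1 else 0

/-- The "down" orthogonal projector `P↘(α)` of dimension `(k+1)×(k+1)` associated
with the word `as = a₁⋯a_k` and the letter `α`: the entry `(r,s)` is `1/2` if
`r = s` and `r` belongs to some block `{jᵢ^{(α)}, jᵢ^{(α)}+1}`, `-1/2` if `r ≠ s` and
`r, s` belong to a common block, and `0` otherwise. -/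
noncomputable def downProj {σ : Type} [DecidableEq σ] (as : List σ) (α : σ) :
    Matrix (Fin (as.length + 1)) (Fin (as.length + 1)) ℝ :=
  Matrix.of fun r s =>
    if ∃ q : Fin as.length, as.get q = α ∧
        (r = q.castSucc ∨ r = q.succ) ∧ (s = q.castSucc ∨ s = q.succ) then
      (if r = s then 1 / 2 else -(1 / 2))
    else 0

/-- The first standard basis row vector `e₁ ∈ ℝ^{1×(k+1)}`. -/
noncomputable def e1 {n : ℕ} : Matrix (Fin 1) (Fin (n + 1)) ℝ :=
  Matrix.of fun _ i => if i = 0 then 1 else 0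

/-- `π = e₁ · P↗(w₁) ⋯ P↗(w_n)` : the row vector obtained from `e₁` by applying the
up projectors of the letters of `w` (note `upProj as c` is the identity matrix for
letters `c` not occurring in `as`). -/
noncomputable def upState {σ : Type} [DecidableEq σ] (as : List σ) (w : List σ) :
    Matrix (Fin 1) (Fin (as.length + 1)) ℝ :=
  e1 * (w.map fun c => upProj as c).prod

/-
Let `m` be the number of letters of `a₁⋯a_k` matched by greedily embedding it into `w` as a
subsequence. Reading `w` letter by letter preserves the invariant: `π` vanishes beyond index
`m+1` and is at least `2^{-m}` at every index up to `m+1`. Indeed `P↗(c)` replaces `π` on each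
block `{j, j+1}` with `a_j = c` by its average there and leaves the other coordinates alone;
blocks of one letter are disjoint because consecutive letters differ. The only block meeting
both sides of the front is `{m+1, m+2}` when `a_{m+1} = c`, and then the front advances while
the floor is halved. Finally `m ≤ k`, and `m = k` whenever `a₁⋯a_k` is a subsequence of `w`.
-/

open scoped Matrix

section

variable {σ : Type}

lemma List.IsChain.getElem?_succ_ne {as : List σ} (h : as.IsChain (· ≠ ·)) {q : ℕ} {c : σ}
    (hq : as[q]? = some c) : as[q + 1]? ≠ some c := by
  intro hq'
  obtain ⟨hlt, rfl⟩ := List.getElem?_eq_some_iff.mp hq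
  obtain ⟨hlt', heq⟩ := List.getElem?_eq_some_iff.mp hq'
  exact List.isChain_iff_getElem.mp h q hlt' heq.symm

lemma List.getElem?_eq_some_of_get_eq {as : List σ} {q : Fin as.length} {c : σ}
    (h : as.get q = c) : as[(q : ℕ)]? = some c := by
  simp [← h]

lemma Fin.eq_castSucc_or_eq_succ_iff {n : ℕ} {q : Fin n} {s : Fin (n + 1)} :
    (s = q.castSucc ∨ s = q.succ) ↔ ((s : ℕ) = q ∨ (s : ℕ) = q + 1) := by
  simp [Fin.ext_iff]

lemma eq_of_mem_blocks {as : List σ} (hchain : as.IsChain (· ≠ ·)) {q q' : Fin as.length}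
    {c : σ} (hq : as.get q = c) (hq' : as.get q' = c) {s : Fin (as.length + 1)}
    (hs : s = q.castSucc ∨ s = q.succ) (hs' : s = q'.castSucc ∨ s = q'.succ) : q = q' := by
  have h := hchain.getElem?_succ_ne (List.getElem?_eq_some_of_get_eq hq)
  have h' := hchain.getElem?_succ_ne (List.getElem?_eq_some_of_get_eq hq')
  rw [Fin.eq_castSucc_or_eq_succ_iff] at hs hs'
  ext
  by_contra hne
  rcases Nat.lt_or_gt_of_ne hne with hlt | hlt
  · rw [show (q : ℕ) + 1 = q' by omega] at h
    exact h (List.getElem?_eq_some_of_get_eq hq')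
  · rw [show (q' : ℕ) + 1 = q by omega] at h'
    exact h' (List.getElem?_eq_some_of_get_eq hq)

variable [DecidableEq σ]

lemma vecMul_upProj_of_not_mem {as : List σ} {c : σ} (x : Fin (as.length + 1) → ℝ)
    {s : Fin (as.length + 1)}
    (hs : ¬∃ q : Fin as.length, as.get q = c ∧ (s = q.castSucc ∨ s = q.succ)) :
    (x ᵥ* upProj as c) s = x s := by
  have hcol : ∀ r, upProj as c r s = if r = s then 1 else 0 := fun r => by
    rw [upProj, Matrix.of_apply, if_neg]
    rintro ⟨q, hq, -, hsq⟩
    exact hs ⟨q, hq, hsq⟩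
  simp [Matrix.vecMul, dotProduct, hcol]

lemma vecMul_upProj_of_mem {as : List σ} (hchain : as.IsChain (· ≠ ·)) {c : σ}
    (x : Fin (as.length + 1) → ℝ) {q : Fin as.length} (hq : as.get q = c)
    {s : Fin (as.length + 1)} (hs : s = q.castSucc ∨ s = q.succ) :
    (x ᵥ* upProj as c) s = (x q.castSucc + x q.succ) / 2 := by
  have hcol : ∀ r, upProj as c r s =
      if r ∈ ({q.castSucc, q.succ} : Finset _) then 1 / 2 else 0 := fun r => by
    by_cases hr : r = q.castSucc ∨ r = q.succ
    · simp only [upProj, Matrix.of_apply]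
      rw [if_pos ⟨q, hq, hr, hs⟩, if_pos (by simpa using hr)]
    · rw [upProj, Matrix.of_apply, if_neg, if_neg, if_neg (by simpa using hr)]
      · rintro rfl; exact hr hs
      · rintro ⟨q', hq', hr', hs'⟩
        obtain rfl := eq_of_mem_blocks hchain hq' hq hs' hs
        exact hr hr'
  simp only [Matrix.vecMul, dotProduct, hcol, mul_ite, mul_zero, Finset.sum_ite_mem,
    Finset.univ_inter]
  rw [Finset.sum_pair Fin.castSucc_lt_succ.ne]
  ring

/-- With `m` letters of `as` matched so far, the next letter `c` of the word either matches
`as[m]` or is skipped: `w.foldl (greedyStep as) 0` counts the letters of `as` matched by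
greedily embedding it into `w` as a subsequence. -/
def greedyStep (as : List σ) (m : ℕ) (c : σ) : ℕ :=
  if as[m]? = some c then m + 1 else m

lemma greedyStep_of_getElem? {as : List σ} {m : ℕ} {c : σ} (h : as[m]? = some c) :
    greedyStep as m c = m + 1 :=
  if_pos h

lemma getElem?_of_lt_greedyStep {as : List σ} {m : ℕ} {c : σ} (h : m < greedyStep as m c) :
    as[m]? = some c := by
  unfold greedyStep at h
  split_ifs at h with hm
  exacts [hm, absurd h (lt_irrefl m)]

lemma le_greedyStep (as : List σ) (m : ℕ) (c : σ) : m ≤ greedyStep as m c := by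
  unfold greedyStep; split_ifs <;> omega

lemma greedyStep_le_succ (as : List σ) (m : ℕ) (c : σ) : greedyStep as m c ≤ m + 1 := by
  unfold greedyStep; split_ifs <;> omega

lemma monotone_greedyStep (as : List σ) (c : σ) : Monotone (greedyStep as · c) := by
  intro m m' hmm'
  rcases hmm'.eq_or_lt with rfl | hlt
  · rfl
  · exact (greedyStep_le_succ as m c).trans (hlt.trans_le (le_greedyStep as m' c))

lemma monotone_foldl_greedyStep (as w : List σ) : Monotone (w.foldl (greedyStep as)) := by
  induction w with
  | nil => exact monotone_id
  | cons c w ih => exact ih.comp (monotone_greedyStep as c)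

lemma foldl_greedyStep_le_length {as : List σ} (w : List σ) {m : ℕ} (hm : m ≤ as.length) :
    w.foldl (greedyStep as) m ≤ as.length := by
  induction w generalizing m with
  | nil => exact hm
  | cons c w ih =>
    refine ih ?_
    unfold greedyStep
    split_ifs with h
    · exact (List.getElem?_eq_some_iff.mp h).1
    · exact hm

lemma length_le_foldl_greedyStep {as w : List σ} {m : ℕ} (h : (as.drop m).Sublist w) :
    as.length ≤ w.foldl (greedyStep as) m := by
  induction w generalizing m with
  | nil => simpa using List.sublist_nil.mp h
  | cons c w ih =>
    rw [List.foldl_cons]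
    rcases List.sublist_cons_iff.mp h with h | ⟨r, hdrop, hr⟩
    · exact (ih h).trans (monotone_foldl_greedyStep as w (le_greedyStep as m c))
    · have hm : as[m]? = some c := by
        rw [← List.head?_drop, hdrop, List.head?_cons]
      rw [greedyStep_of_getElem? hm]
      exact ih (by rwa [← List.drop_drop, hdrop, List.drop_one, List.tail_cons])

structure IsFront {n : ℕ} (x : Fin n → ℝ) (m : ℕ) : Prop where
  eq_zero : ∀ i : Fin n, m < i → x i = 0
  pow_le : ∀ i : Fin n, (i : ℕ) ≤ m → (2⁻¹ : ℝ) ^ m ≤ x i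

lemma isFront_e1 {n : ℕ} : IsFront (e1 (n := n) 0) 0 where
  eq_zero i hi := by
    have hi0 : i ≠ 0 := by rintro rfl; simp at hi
    simp [e1, hi0]
  pow_le i hi := by
    obtain rfl : i = 0 := Fin.ext (Nat.le_zero.mp hi)
    simp [e1]

namespace IsFront

variable {as : List σ} {x : Fin (as.length + 1) → ℝ} {m : ℕ}

lemma vecMul_upProj_eq_zero (hx : IsFront x m) (hchain : as.IsChain (· ≠ ·)) (c : σ)
    (s : Fin (as.length + 1)) (hs : greedyStep as m c < s) : (x ᵥ* upProj as c) s = 0 := by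
  have hle := le_greedyStep as m c
  by_cases hblock : ∃ q : Fin as.length, as.get q = c ∧ (s = q.castSucc ∨ s = q.succ)
  · obtain ⟨q, hq, hsq⟩ := hblock
    rw [vecMul_upProj_of_mem hchain x hq hsq]
    rw [Fin.eq_castSucc_or_eq_succ_iff] at hsq
    by_cases hqm : (q : ℕ) = m
    · have := greedyStep_of_getElem? (hqm ▸ List.getElem?_eq_some_of_get_eq hq)
      omega
    · rw [hx.eq_zero q.castSucc (by simp; omega), hx.eq_zero q.succ (by simp; omega)]
      norm_num
  · rw [vecMul_upProj_of_not_mem x hblock]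
    exact hx.eq_zero s (by omega)

lemma pow_le_vecMul_upProj (hx : IsFront x m) (hchain : as.IsChain (· ≠ ·)) (c : σ)
    (s : Fin (as.length + 1)) (hs : (s : ℕ) ≤ greedyStep as m c) :
    (2⁻¹ : ℝ) ^ greedyStep as m c ≤ (x ᵥ* upProj as c) s := by
  have hle' := greedyStep_le_succ as m c
  have hfloor : ∀ i : Fin (as.length + 1), (i : ℕ) ≤ m → (2⁻¹ : ℝ) ^ greedyStep as m c ≤ x i :=
    fun i hi => (pow_le_pow_of_le_one (by norm_num) (by norm_num) (le_greedyStep as m c)).trans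
      (hx.pow_le i hi)
  by_cases hblock : ∃ q : Fin as.length, as.get q = c ∧ (s = q.castSucc ∨ s = q.succ)
  · obtain ⟨q, hq, hsq⟩ := hblock
    rw [vecMul_upProj_of_mem hchain x hq hsq]
    rw [Fin.eq_castSucc_or_eq_succ_iff] at hsq
    rcases lt_trichotomy (q : ℕ) m with hlt | rfl | hgt
    · have h1 := hfloor q.castSucc (by simp; omega)
      have h2 := hfloor q.succ (by simp; omega)
      linarith
    · rw [greedyStep_of_getElem? (List.getElem?_eq_some_of_get_eq hq), pow_succ,
        hx.eq_zero q.succ (by simp)]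
      have := hx.pow_le q.castSucc (by simp)
      linarith
    · -- here `s = q = m + 1`, so both `as[m]` and `as[m + 1]` would equal `c`
      have hq' : as[m + 1]? = some c := by
        rw [show m + 1 = q by omega]; exact List.getElem?_eq_some_of_get_eq hq
      exact absurd hq' (hchain.getElem?_succ_ne (getElem?_of_lt_greedyStep (by omega)))
  · rw [vecMul_upProj_of_not_mem x hblock]
    by_cases hsm : (s : ℕ) ≤ m
    · exact hfloor s hsm
    · have hgrew : m < greedyStep as m c := by omega
      obtain ⟨hm, hmc⟩ := List.getElem?_eq_some_iff.mp (getElem?_of_lt_greedyStep hgrew)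
      exact (hblock ⟨⟨m, hm⟩, hmc, Or.inr (Fin.ext (by simp; omega))⟩).elim

lemma vecMul_upProj (hx : IsFront x m) (hchain : as.IsChain (· ≠ ·)) (c : σ) :
    IsFront (x ᵥ* upProj as c) (greedyStep as m c) :=
  ⟨hx.vecMul_upProj_eq_zero hchain c, hx.pow_le_vecMul_upProj hchain c⟩

lemma vecMul_prod_upProj (hx : IsFront x m) (hchain : as.IsChain (· ≠ ·)) (w : List σ) :
    IsFront (x ᵥ* (w.map (upProj as)).prod) (w.foldl (greedyStep as) m) := by
  induction w generalizing x m with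
  | nil => simpa using hx
  | cons c w ih =>
    rw [List.map_cons, List.prod_cons, ← Matrix.vecMul_vecMul, List.foldl_cons]
    exact ih (hx.vecMul_upProj hchain c)

end IsFront

end

theorem up_projector_amplitudes_general
    (σ : Type) [DecidableEq σ] (as : List σ)
    (hchain : as.Chain' (· ≠ ·)) (w : List σ) :
    (as.Sublist w → ∀ i : Fin (as.length + 1), 0 < upState as w 0 i) ∧
    (∀ i j : Fin (as.length + 1), j ≤ i → 0 < upState as w 0 i →
      upState as w 0 j ≥ (2 : ℝ) ^ (-(as.length : ℤ))) := by
  set m := w.foldl (greedyStep as) 0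
  have hfront : IsFront (upState as w 0) m := isFront_e1.vecMul_prod_upProj hchain w
  have hm : m ≤ as.length := foldl_greedyStep_le_length w (Nat.zero_le _)
  have hfloor : (2 : ℝ) ^ (-(as.length : ℤ)) ≤ 2⁻¹ ^ m := by
    rw [zpow_neg, zpow_natCast, ← inv_pow]
    exact pow_le_pow_of_le_one (by norm_num) (by norm_num) hm
  refine ⟨fun hsub i => ?_, fun i j hji hi => ?_⟩
  · have hlen : as.length ≤ m := length_le_foldl_greedyStep (by simpa using hsub)
    exact lt_of_lt_of_le (by positivity) (hfront.pow_le i (by omega))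
  · have him : (i : ℕ) ≤ m := by
      by_contra h
      exact hi.ne' (hfront.eq_zero i (by omega))
    exact hfloor.trans (hfront.pow_le j (by omega))

/-- Fix `k ≥ 1` and letters `a₁,…,a_k` with `aᵢ ≠ aᵢ₊₁`.  For a word
`w = w₁⋯w_n` let `π := e₁ · P↗(w₁) ⋯ P↗(w_n)` (where `P↗(c)` is the identity matrix
for letters `c` not occurring in `a₁⋯a_k`).  Then (1) if
`w ∈ L[a₁,…,a_k] = Σ* a₁ Σ* ⋯ Σ* a_k Σ*` then every coordinate of `π` is positive,
and (2) for all `1 ≤ j ≤ i ≤ k+1`, if `(π)ᵢ > 0` then `(π)ⱼ ≥ 2^{−k}`. -/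
theorem up_projector_amplitudes
    (σ : Type) [DecidableEq σ] (as : List σ) (hne : as ≠ [])
    (hchain : as.Chain' (· ≠ ·)) (w : List σ) :
    (as.Sublist w → ∀ i : Fin (as.length + 1), 0 < upState as w 0 i) ∧
    (∀ i j : Fin (as.length + 1), j ≤ i → 0 < upState as w 0 i →
      upState as w 0 j ≥ (2 : ℝ) ^ (-(as.length : ℤ))) :=
  up_projector_amplitudes_general σ as hchain w
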